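/- Let G = (I, A, src, tgt, o, d) be a condensed DAG. Fix an arc a ∈ A and a route r ∈ R containing a such that m_{a,r} = m_a. Then for every arc a' that follows a in r (i.e., a' occurs in r with m_{a',r} < m_{a,r}), we have m_{a',r} = m_{a'}. -/

import Mathlib

/-- A condensed DAG: finite node set `I`, finite arc set `A`, arc endpoint maps
`src, tgt : A → I`, distinct origin `o` and destination `d`, no directed cycles,
and every arc lies on at least one route from `o` to `d`. -/
structure CondensedDAG (I : Type*) (A : Type*) [Fintype I] [Fintype A] where
  src : A → I
  tgt : A → I
  o : I
  d : I
  o_ne_d : o ≠ d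
  /-- No directed cycle: there is no nonempty chain of consecutive arcs whose
  last arc's target is the first arc's source. -/
  acyclic : ∀ (a : A) (l : List A),
      List.Chain' (fun x y => tgt x = src y) (a :: l) →
      tgt ((a :: l).getLast (List.cons_ne_nil a l)) ≠ src a
  /-- Every arc lies on at least one route from `o` to `d`. -/
  covered : ∀ a : A, ∃ r : List A,
      (r ≠ [] ∧ (∀ b ∈ r.head?, src b = o) ∧ (∀ b ∈ r.getLast?, tgt b = d) ∧
        List.Chain' (fun x y => tgt x = src y) r) ∧ a ∈ r

namespace CondensedDAG

variable {I A : Type*} [Fintype I] [Fintype A]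

/-- A route: a nonempty list of consecutive arcs starting at `o` and ending at `d`. -/
def IsRoute (G : CondensedDAG I A) (r : List A) : Prop :=
  r ≠ [] ∧ (∀ b ∈ r.head?, G.src b = G.o) ∧ (∀ b ∈ r.getLast?, G.tgt b = G.d) ∧
    List.Chain' (fun x y => G.tgt x = G.src y) r

/-- The depth `ℓ_a` of an arc: the largest (1-based) position at which `a`
occurs in some route. -/
noncomputable def depth (G : CondensedDAG I A) (a : A) : ℕ :=
  sSup {k : ℕ | 1 ≤ k ∧ ∃ r : List A, G.IsRoute r ∧ r[k - 1]? = some a}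

/-- The depth `ℓ(G)` of the condensed DAG: maximal depth over all arcs. -/
noncomputable def graphDepth (G : CondensedDAG I A) : ℕ :=
  sSup (Set.range G.depth)

/-- The height `m_a` of an arc: the largest value of `|r| + 1 - ℓ_{a,r}` over
routes `r` containing `a` at (1-based) position `ℓ_{a,r}`. -/
noncomputable def height (G : CondensedDAG I A) (a : A) : ℕ :=
  sSup {k : ℕ | ∃ (r : List A) (j : ℕ), G.IsRoute r ∧ 1 ≤ j ∧ r[j - 1]? = some a ∧
    k = r.length + 1 - j}

/-- The height `m(G)` of the condensed DAG: maximal height over all arcs. -/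
noncomputable def graphHeight (G : CondensedDAG I A) : ℕ :=
  sSup (Set.range G.height)

end CondensedDAG

section Aux

open List in
private lemma getLast_head_cons_tail {α : Type*} (L : List α) (h : L ≠ []) :
    (L.head h :: L.tail).getLast (List.cons_ne_nil _ _) = L.getLast h := by
  cases L with
  | nil => exact absurd rfl h
  | cons x xs => rfl

variable {I A : Type*} [Fintype I] [Fintype A]

/-- Any chain of consecutive arcs in an acyclic graph has no duplicates. -/
lemma CondensedDAG.chain'_nodup (G : CondensedDAG I A) (r : List A)
    (hc : List.Chain' (fun x y => G.tgt x = G.src y) r) : r.Nodup := by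
  have key : ∀ p q : Fin r.length, (p : ℕ) < (q : ℕ) → r.get p = r.get q → False := by
    intro p q hlt hpq
    have hq : (q : ℕ) < r.length := q.isLt
    set l : List A := (r.drop (p : ℕ)).take ((q : ℕ) - (p : ℕ)) with hl
    have hlen : l.length = (q : ℕ) - (p : ℕ) := by
      simp only [hl, List.length_take, List.length_drop]
      omega
    have hlne : l ≠ [] := by
      intro h
      rw [h] at hlen
      simp only [List.length_nil] at hlen
      omega
    have hget : ∀ (i : ℕ) (hi : i < l.length), l[i] = r[(p : ℕ) + i]'(by omega) := by
      intro i hi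
      simp only [hl, List.getElem_take, List.getElem_drop]
    have hhead : l.head hlne = r.get p := by
      rw [List.head_eq_getElem, hget 0 (by omega)]
      simp [List.get_eq_getElem]
    have hlast : l.getLast hlne = r[(q : ℕ) - 1]'(by omega) := by
      rw [List.getLast_eq_getElem, hget _ (by omega)]
      congr 1
      omega
    have hchain : List.Chain' (fun x y => G.tgt x = G.src y) l :=
      (hc.drop (p : ℕ)).take _
    have hcl : List.Chain' (fun x y => G.tgt x = G.src y) (l.head hlne :: l.tail) := by
      rwa [List.cons_head_tail]
    have hacy := G.acyclic (l.head hlne) l.tail hcl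
    apply hacy
    rw [getLast_head_cons_tail l hlne, hhead, hlast]
    have hstep := List.isChain_iff_getElem.mp hc ((q : ℕ) - 1) (by omega)
    simp only [List.get_eq_getElem] at hstep hpq ⊢
    rw [hstep]
    have hidx : r[(q : ℕ) - 1 + 1]'(by omega) = r[(q : ℕ)]'hq := by
      congr 1
      omega
    rw [hidx, ← hpq]
  rw [List.nodup_iff_injective_get]
  intro p q hpq
  by_contra hne
  have hvne : (p : ℕ) ≠ (q : ℕ) := fun h => hne (Fin.ext h)
  rcases lt_or_gt_of_ne hvne with h | h
  · exact key p q h hpq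
  · exact key q p h hpq.symm

lemma CondensedDAG.route_length_le (G : CondensedDAG I A) (r : List A)
    (hr : G.IsRoute r) : r.length ≤ Fintype.card A :=
  (G.chain'_nodup r hr.2.2.2).length_le_card

lemma CondensedDAG.heightSet_bddAbove (G : CondensedDAG I A) (a : A) :
    BddAbove {k : ℕ | ∃ (r : List A) (j : ℕ), G.IsRoute r ∧ 1 ≤ j ∧ r[j - 1]? = some a ∧
      k = r.length + 1 - j} := by
  refine ⟨Fintype.card A, ?_⟩
  rintro k ⟨r, j, hr, hj, -, rfl⟩
  have := G.route_length_le r hr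
  omega

end Aux

/-- if arc `a` occurs in route `r` at position `j` with height-position
`m_{a,r} = |r| + 1 - j` equal to its height `m_a`, then every arc `a'` following `a`
in `r` (i.e. occurring at position `j'` with `m_{a',r} < m_{a,r}`) satisfies
`m_{a',r} = m_{a'}`. -/
theorem height_of_following_arcs_on_height_attaining_route
    {I A : Type*} [Fintype I] [Fintype A]
    (G : CondensedDAG I A) (r : List A) (hr : G.IsRoute r)
    (a : A) (j : ℕ) (hj : 1 ≤ j) (ha : r[j - 1]? = some a)
    (hattain : r.length + 1 - j = G.height a)
    (a' : A) (j' : ℕ) (hj' : 1 ≤ j') (ha' : r[j' - 1]? = some a')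
    (hlt : r.length + 1 - j' < r.length + 1 - j) :
    G.height a' = r.length + 1 - j' := by
  obtain ⟨hjlen, hja⟩ := List.getElem?_eq_some_iff.mp ha
  obtain ⟨hjlen', hja'⟩ := List.getElem?_eq_some_iff.mp ha'
  have hjj' : j < j' := by omega
  have hj'le : j' ≤ r.length := by omega
  have hge : r.length + 1 - j' ≤ G.height a' :=
    le_csSup (G.heightSet_bddAbove a') ⟨r, j', hr, hj', ha', rfl⟩
  by_contra hne
  have hgt : r.length + 1 - j' < G.height a' := lt_of_le_of_ne hge (Ne.symm hne)
  have hmem : G.height a' ∈ {k : ℕ | ∃ (r : List A) (j : ℕ), G.IsRoute r ∧ 1 ≤ j ∧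
      r[j - 1]? = some a' ∧ k = r.length + 1 - j} :=
    Nat.sSup_mem ⟨r.length + 1 - j', r, j', hr, hj', ha', rfl⟩ (G.heightSet_bddAbove a')
  obtain ⟨r', j'', hr', hj'', ha'', hk⟩ := hmem
  obtain ⟨hjlen'', hja''⟩ := List.getElem?_eq_some_iff.mp ha''
  have hj''le : j'' ≤ r'.length := by omega
  have hbig : r.length - j' + 1 ≤ r'.length - j'' := by omega
  set r2 : List A := r.take j' ++ r'.drop j'' with hr2def
  have hlen1 : (r.take j').length = j' := by
    rw [List.length_take]; omega
  have hlen2 : (r'.drop j'').length = r'.length - j'' := List.length_drop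
  have hlenr2 : r2.length = j' + (r'.length - j'') := by
    rw [hr2def, List.length_append, hlen1, hlen2]
  have hchainr := hr.2.2.2
  have hchainr' := hr'.2.2.2
  have hroute2 : G.IsRoute r2 := by
    refine ⟨?_, ?_, ?_, ?_⟩
    · intro h
      have hc := congrArg List.length h
      rw [hlenr2] at hc
      simp only [List.length_nil] at hc
      omega
    · intro b hb
      apply hr.2.1
      rw [List.head?_eq_getElem?] at hb ⊢
      rw [hr2def, List.getElem?_append, hlen1, if_pos (by omega),
        List.getElem?_take, if_pos (by omega)] at hb
      exact hb
    · intro b hb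
      rw [List.getLast?_eq_getElem?, hlenr2] at hb
      rcases lt_or_eq_of_le hj''le with hcase | hcase
      · rw [hr2def, List.getElem?_append, hlen1, if_neg (by omega),
          List.getElem?_drop] at hb
        apply hr'.2.2.1
        rw [List.getLast?_eq_getElem?]
        rw [show j'' + (j' + (r'.length - j'') - 1 - j') = r'.length - 1 from by omega] at hb
        exact hb
      · rw [hr2def, List.getElem?_append, hlen1, if_pos (by omega),
          List.getElem?_take, if_pos (by omega),
          show j' + (r'.length - j'') - 1 = j' - 1 from by omega, ha'] at hb
        have hba : a' = b := by simpa using hb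
        subst hba
        apply hr'.2.2.1
        rw [List.getLast?_eq_getElem?, show r'.length - 1 = j'' - 1 from by omega]
        exact ha''
    · rw [hr2def]
      apply List.IsChain.append (hchainr.take j') (hchainr'.drop j'')
      intro x hx y hy
      rw [List.getLast?_eq_getElem?, hlen1, List.getElem?_take, if_pos (by omega), ha'] at hx
      have hxa : a' = x := by simpa using hx
      subst hxa
      rw [List.head?_eq_getElem?, List.getElem?_drop] at hy
      have hylen : j'' + 0 < r'.length := by
        by_contra hcon
        rw [List.getElem?_eq_none (by omega)] at hy
        exact absurd hy (by simp)
      rw [List.getElem?_eq_getElem hylen] at hy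
      have hyv : r'[j'' + 0] = y := by simpa using hy
      subst hyv
      have hstep := List.isChain_iff_getElem.mp hchainr' (j'' - 1) (by omega)
      have hidx : r'[j'' - 1 + 1]'(by omega) = r'[j'' + 0]'hylen := by
        congr 1
        omega
      rw [← hja'', hstep, hidx]
  have ha2 : r2[j - 1]? = some a := by
    rw [hr2def, List.getElem?_append, hlen1, if_pos (by omega),
      List.getElem?_take, if_pos (by omega)]
    exact ha
  have hfin : r2.length + 1 - j ≤ G.height a :=
    le_csSup (G.heightSet_bddAbove a) ⟨r2, j, hroute2, hj, ha2, rfl⟩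
  rw [← hattain, hlenr2] at hfin
  omega
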